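/- Let r ≥ 1 be an integer and let a_0, a_1, ..., a_r and d_0, ..., d_{r−1} be nonnegative real numbers such that for every real q > 0 and every 1 ≤ j ≤ r, a_j ≤ (1+q) a_{j−1} + (1 + 1/q) d_{j−1}. Then a_r ≤ e · a_0 + e (r+1) Σ_{j=0}^{r−1} d_j, where e is Euler's number. -/

import Mathlib

open Finset

/-! With `q = 1/r` every step multiplies by `1 + 1/r` and adds `(1 + r) d_j`; unrolling the `r`
steps costs at most a factor `(1 + 1/r)^r ≤ e` on everything. -/

theorem le_pow_mul_add_mul_sum_of_le_mul_add {c b : ℝ} (hc : 1 ≤ c) (hb : 0 ≤ b)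
    {a d : ℕ → ℝ} {n : ℕ} (hd : ∀ j < n, 0 ≤ d j)
    (h : ∀ j < n, a (j + 1) ≤ c * a j + b * d j) :
    a n ≤ c ^ n * (a 0 + b * ∑ j ∈ range n, d j) := by
  induction n with
  | zero => simp
  | succ n ih =>
    have ih := ih (fun j hj => hd j (by omega)) (fun j hj => h j (by omega))
    have hbd : b * d n ≤ c ^ (n + 1) * (b * d n) :=
      le_mul_of_one_le_left (mul_nonneg hb (hd n (by omega))) (one_le_pow₀ hc)
    calc a (n + 1) ≤ c * a n + b * d n := h n (by omega)
      _ ≤ c * (c ^ n * (a 0 + b * ∑ j ∈ range n, d j)) + c ^ (n + 1) * (b * d n) := by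
          gcongr
      _ = c ^ (n + 1) * (a 0 + b * ∑ j ∈ range (n + 1), d j) := by
          rw [sum_range_succ]; ring

/-- **Cross-round recursion bound.**
If nonnegative reals satisfy, for every `q > 0` and `1 ≤ j ≤ r`,
`a j ≤ (1+q) a (j−1) + (1 + 1/q) d (j−1)`, then
`a r ≤ e · a 0 + e (r+1) ∑_{j=0}^{r−1} d j`. -/
theorem stmt8 (r : ℕ) (hr : 1 ≤ r) (a dd : ℕ → ℝ)
    (ha : ∀ j ≤ r, 0 ≤ a j) (hd : ∀ j < r, 0 ≤ dd j)
    (hrec : ∀ q : ℝ, 0 < q → ∀ j, 1 ≤ j → j ≤ r →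
      a j ≤ (1 + q) * a (j - 1) + (1 + 1 / q) * dd (j - 1)) :
    a r ≤ Real.exp 1 * a 0
      + Real.exp 1 * ((r : ℝ) + 1) * ∑ j ∈ Finset.range r, dd j := by
  have hr₀ : (0 : ℝ) < r := by exact_mod_cast hr
  have hstep : ∀ j < r, a (j + 1) ≤ (1 + (r : ℝ)⁻¹) * a j + ((r : ℝ) + 1) * dd j := by
    intro j hj
    have := hrec (r : ℝ)⁻¹ (inv_pos.mpr hr₀) (j + 1) (by omega) hj
    rwa [Nat.add_sub_cancel, one_div, inv_inv, add_comm 1 (r : ℝ)] at this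
  have hunroll := le_pow_mul_add_mul_sum_of_le_mul_add
    (le_add_of_nonneg_right (inv_nonneg.mpr hr₀.le)) (by positivity) hd hstep
  have hbase : 0 ≤ a 0 + ((r : ℝ) + 1) * ∑ j ∈ range r, dd j :=
    add_nonneg (ha 0 (Nat.zero_le r))
      (mul_nonneg (by positivity) (sum_nonneg fun j hj => hd j (mem_range.mp hj)))
  calc a r ≤ (1 + (r : ℝ)⁻¹) ^ r * (a 0 + ((r : ℝ) + 1) * ∑ j ∈ range r, dd j) := hunroll
    _ ≤ Real.exp 1 * (a 0 + ((r : ℝ) + 1) * ∑ j ∈ range r, dd j) :=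
        mul_le_mul_of_nonneg_right Real.one_add_inv_pow_le_exp hbase
    _ = Real.exp 1 * a 0 + Real.exp 1 * ((r : ℝ) + 1) * ∑ j ∈ range r, dd j := by ring
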